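/- arXiv:2605.13615 — 3 statements merged into one kernel-verified Lean document; each statement's English description precedes it below -/
import Mathlib

section
/- Let n ≥ 1, let R be a commutative ring, and let A be an n × n matrix over R indexed by ZMod n. Then det A = Σ_{σ : σ(0)=0} Σ_{r ∈ ZMod n} sign(σ ∘ ρ_r) · Π_{i ∈ ZMod n} A((σ ∘ ρ_r)(i), i); that is, the Leibniz expansion of the determinant is recovered by summing, over the (n−1)! canonical representatives σ, the n signed monomials of each cyclic orbit. -/
open Equiv

/-!
Every permutation `τ` of an additive group factors uniquely as `σ * Equiv.addRight r` with
`σ 0 = 0`: necessarily `r = -τ⁻¹ 0` and `σ = τ * Equiv.addRight (τ⁻¹ 0)`. Reindexing the Leibniz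
sum along this bijection groups its terms into the translation orbits of the permutations
fixing `0`.
-/

namespace Equiv.Perm

variable {G : Type*} [AddGroup G]

def equivFixZeroProdAddRight : Perm G ≃ {σ : Perm G // σ 0 = 0} × G where
  toFun τ := (⟨τ * Equiv.addRight (τ⁻¹ 0), by simp⟩, -τ⁻¹ 0)
  invFun p := p.1 * Equiv.addRight p.2
  left_inv τ := by ext x; simp
  right_inv := by
    rintro ⟨⟨σ, hσ⟩, r⟩
    have hσ' : σ.symm 0 = 0 := σ.symm_apply_eq.mpr hσ.symm
    ext x <;> simp [hσ', add_assoc]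

theorem sum_eq_sum_fixZero_sum_addRight [Fintype G] [DecidableEq G] {M : Type*}
    [AddCommMonoid M] (f : Perm G → M) :
    ∑ τ, f τ =
      ∑ σ ∈ Finset.univ.filter (fun σ : Perm G => σ 0 = 0), ∑ r : G, f (σ * Equiv.addRight r) := by
  rw [Fintype.sum_equiv equivFixZeroProdAddRight f (fun p => f (p.1 * Equiv.addRight p.2))
    (fun τ => congrArg f (equivFixZeroProdAddRight.left_inv τ).symm), Fintype.sum_prod_type,
    Finset.sum_subtype _ (fun σ => Finset.mem_filter_univ σ)]

end Equiv.Perm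

/-- Correctness of the orbital method: for `n ≥ 1` the Leibniz expansion of the
determinant of an `n × n` matrix indexed by `ZMod n` is recovered by summing, over
the `(n−1)!` canonical representatives `σ` (those with `σ 0 = 0`), the `n` signed
monomials of each cyclic orbit. -/
theorem stmt_7 (n : ℕ) [NeZero n] (R : Type*) [CommRing R]
    (A : Matrix (ZMod n) (ZMod n) R) :
    A.det = ∑ σ ∈ Finset.univ.filter (fun σ : Equiv.Perm (ZMod n) => σ 0 = 0),
      ∑ r : ZMod n,
        ((Equiv.Perm.sign (σ * (Equiv.addRight r : Equiv.Perm (ZMod n))) : ℤ) : R) *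
          ∏ i : ZMod n, A ((σ * (Equiv.addRight r : Equiv.Perm (ZMod n))) i) i := by
  rw [Matrix.det_apply']
  exact Perm.sum_eq_sum_fixZero_sum_addRight _
end

section
/- Let n ≥ 1, let R be a commutative ring, and let A be an n × n matrix over R indexed by ZMod n. Then det A = Σ_{σ : σ(0)=0} Σ_{r ∈ ZMod n} sign(σ) · (−1)^{(n−1)·val(r)} · Π_{i ∈ ZMod n} A(σ(i + r), i), where val(r) ∈ {0, …, n−1} is the natural-number representative of r; that is, the determinant equals the sum over canonical representatives of their rectified offset-diagonal products, with signs given by the orbital sign rule. -/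
/-!
Every permutation `τ` of an additive group factors uniquely as `σ * Equiv.addRight r` with
`σ 0 = 0` (take `r = -τ⁻¹ 0`). On `ZMod n` translation by `1` is the `n`-cycle `finRotate n`,
so translation by `r` has sign `(-1) ^ ((n - 1) * r.val)`. Reindexing the Leibniz formula along
this factorization gives the identity.
-/

namespace Equiv.Perm

variable {G : Type*}

def fixingZeroProdEquiv [AddGroup G] : {σ : Perm G // σ 0 = 0} × G ≃ Perm G where
  toFun p := p.1 * Equiv.addRight p.2
  invFun τ := (⟨τ * Equiv.addRight (τ⁻¹ 0), by simp⟩, -τ⁻¹ 0)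
  left_inv := fun ⟨⟨σ, hσ⟩, r⟩ => by
    have hσ' : σ.symm 0 = 0 := by rw [symm_apply_eq, hσ]
    ext <;> simp [hσ']
  right_inv τ := by ext; simp

@[simp]
lemma fixingZeroProdEquiv_apply [AddGroup G] (p : {σ : Perm G // σ 0 = 0} × G) :
    fixingZeroProdEquiv p = p.1.1 * Equiv.addRight p.2 :=
  rfl

lemma sign_addRight_nsmul [AddGroup G] [Fintype G] [DecidableEq G] (g : G) (k : ℕ) :
    sign (Equiv.addRight (k • g)) = sign (Equiv.addRight g) ^ k := by
  induction k with
  | zero => simp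
  | succ k ih => rw [succ_nsmul, addRight_add, Perm.sign_mul, ih, pow_succ']

end Equiv.Perm

namespace ZMod

open Equiv.Perm

lemma sign_addRight_one (n : ℕ) [NeZero n] :
    sign (Equiv.addRight (1 : ZMod n)) = (-1) ^ (n - 1) := by
  obtain ⟨m, rfl⟩ := Nat.exists_eq_succ_of_ne_zero (NeZero.ne n)
  have : Equiv.addRight (1 : ZMod (m + 1)) = finRotate (m + 1) := by
    ext i
    exact (finRotate_apply i).symm
  rw [this]
  exact sign_finRotate (m + 1)

lemma sign_addRight (n : ℕ) [NeZero n] (r : ZMod n) :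
    sign (Equiv.addRight r) = (-1) ^ ((n - 1) * r.val) := by
  conv_lhs => rw [← natCast_zmod_val r, ← nsmul_one]
  rw [sign_addRight_nsmul, sign_addRight_one, ← pow_mul]

end ZMod

/-- Canonical rectification combined with the orbital sign rule: for `n ≥ 1` and an
`n × n` matrix over a commutative ring indexed by `ZMod n`,
`det A = Σ_{σ(0)=0} Σ_{r} sign σ · (−1)^{(n−1)·val r} · Π_i A (σ (i + r)) i`. -/
theorem stmt_8 (n : ℕ) [NeZero n] (R : Type*) [CommRing R]
    (A : Matrix (ZMod n) (ZMod n) R) :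
    A.det = ∑ σ ∈ Finset.univ.filter (fun σ : Equiv.Perm (ZMod n) => σ 0 = 0),
      ∑ r : ZMod n,
        ((Equiv.Perm.sign σ : ℤ) : R) * (-1 : R) ^ ((n - 1) * r.val) *
          ∏ i : ZMod n, A (σ (i + r)) i := by
  rw [Matrix.det_apply', ← Equiv.Perm.fixingZeroProdEquiv.sum_comp, Fintype.sum_prod_type,
    Finset.sum_subtype (p := fun σ : Equiv.Perm (ZMod n) => σ 0 = 0) _ (by simp)]
  refine Finset.sum_congr rfl fun σ _ => Finset.sum_congr rfl fun r _ => ?_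
  simp [ZMod.sign_addRight, mul_assoc]
end

section
/- Let R be a commutative ring, let m be a natural number, let B and C be m × m matrices over R, and let J be the m × m exchange matrix (J(i,j) = 1 if j = m − 1 − i, and 0 otherwise, so J has ones on the antidiagonal). Then the 2m × 2m centrosymmetric block matrix A with blocks A = [[B, C], [J·C·J, J·B·J]] satisfies det(A) = det(B + C·J) · det(B − C·J). -/
/-- The `m × m` exchange (reversal) matrix, with ones on the antidiagonal:
`J i j = 1` iff `j = m − 1 − i`. -/
def exchangeMatrix (R : Type*) [CommRing R] (m : ℕ) : Matrix (Fin m) (Fin m) R :=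
  Matrix.of fun i j => if j = i.rev then 1 else 0

lemma exchange_mul_self (R : Type*) [CommRing R] (m : ℕ) :
    exchangeMatrix R m * exchangeMatrix R m = 1 := by
  ext i j
  simp only [exchangeMatrix, Matrix.mul_apply, Matrix.of_apply, Matrix.one_apply]
  rw [Finset.sum_eq_single j.rev]
  · simp [Fin.rev_rev, Fin.rev_inj, eq_comm]
  · intro b _ hb
    have hne : j ≠ b.rev := fun h => hb (by rw [h, Fin.rev_rev])
    simp [hne]
  · simp

/-- Centrosymmetric factorization (Cantoni–Butler): for `m × m` matrices `B, C` over
a commutative ring `R` and `J` the exchange matrix, the `2m × 2m` centrosymmetric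
block matrix `A = [[B, C], [J·C·J, J·B·J]]` satisfies
`det A = det (B + C·J) · det (B − C·J)`. -/
theorem stmt_15 (R : Type*) [CommRing R] (m : ℕ) (B C : Matrix (Fin m) (Fin m) R) :
    (Matrix.fromBlocks B C
        (exchangeMatrix R m * C * exchangeMatrix R m)
        (exchangeMatrix R m * B * exchangeMatrix R m)).det =
      (B + C * exchangeMatrix R m).det * (B - C * exchangeMatrix R m).det := by
  set J := exchangeMatrix R m with hJ
  have hJJ : J * J = 1 := exchange_mul_self R m
  set A := Matrix.fromBlocks B C (J * C * J) (J * B * J) with hA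
  set P : Matrix (Fin m ⊕ Fin m) (Fin m ⊕ Fin m) R := Matrix.fromBlocks 1 0 (-J) 1 with hP
  set Q : Matrix (Fin m ⊕ Fin m) (Fin m ⊕ Fin m) R := Matrix.fromBlocks 1 0 J 1 with hQ
  have hPAQ : P * A * Q =
      Matrix.fromBlocks (B + C * J) C 0 (J * B * J - J * C) := by
    rw [hP, hA, hQ, Matrix.fromBlocks_multiply, Matrix.fromBlocks_multiply]
    have e11 : (1 * B + 0 * (J * C * J)) * 1 + (1 * C + 0 * (J * B * J)) * J
        = B + C * J := by noncomm_ring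
    have e12 : (1 * B + 0 * (J * C * J)) * 0 + (1 * C + 0 * (J * B * J)) * 1 = C := by
      noncomm_ring
    have e21 : (-J * B + 1 * (J * C * J)) * 1 + (-J * C + 1 * (J * B * J)) * J = 0 := by
      have h : (-J * B + 1 * (J * C * J)) * 1 + (-J * C + 1 * (J * B * J)) * J
          = -(J * B) + J * C * J - J * C * J + J * B * (J * J) := by noncomm_ring
      rw [h, hJJ]
      noncomm_ring
    have e22 : (-J * B + 1 * (J * C * J)) * 0 + (-J * C + 1 * (J * B * J)) * 1
        = J * B * J - J * C := by noncomm_ring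
    rw [e11, e12, e21, e22]
  have hdP : P.det = 1 := by
    rw [hP, Matrix.det_fromBlocks_zero₁₂]; simp
  have hdQ : Q.det = 1 := by
    rw [hQ, Matrix.det_fromBlocks_zero₁₂]; simp
  have hdA : A.det = (B + C * J).det * (J * B * J - J * C).det := by
    have := congrArg Matrix.det hPAQ
    rw [Matrix.det_mul, Matrix.det_mul, hdP, hdQ, one_mul, mul_one,
      Matrix.det_fromBlocks_zero₂₁] at this
    exact this
  rw [hdA]
  congr 1
  have hfac : J * B * J - J * C = J * (B - C * J) * J := by
    have : J * (B - C * J) * J = J * B * J - J * (C * (J * J)) := by noncomm_ring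
    rw [this, hJJ, mul_one]
  rw [hfac, Matrix.det_mul, Matrix.det_mul]
  have hdJ : J.det * J.det = 1 := by
    rw [← Matrix.det_mul, hJJ, Matrix.det_one]
  rw [mul_right_comm, hdJ, one_mul]
end
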